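/- Fano's inequality: for discrete random variables U, V taking values in a finite set of size M, with error probability p_e = P(U ≠ V), the conditional entropy satisfies H(U | V) ≤ H_b(p_e) + p_e · log(M − 1), where H_b is the binary entropy function. -/

import Mathlib

open Finset Real Set

variable {Ω α β γ : Type*} [Fintype Ω] [Fintype α] [Fintype β] [Fintype γ]
  [DecidableEq α] [DecidableEq β] [DecidableEq γ]

/-- Probability that the random variable `X` takes value `a`, for a pmf `p` on `Ω`. -/
noncomputable def probOf (p : Ω → ℝ) (X : Ω → α) (a : α) : ℝ :=
  ∑ ω, if X ω = a then p ω else 0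

/-- Shannon entropy (in bits) of the discrete random variable `X`. -/
noncomputable def entropy (p : Ω → ℝ) (X : Ω → α) : ℝ :=
  ∑ a, -(probOf p X a * Real.logb 2 (probOf p X a))

/-- Mutual information `I(X;Y) = H(X) + H(Y) - H(X,Y)` (in bits). -/
noncomputable def mutualInfo (p : Ω → ℝ) (X : Ω → α) (Y : Ω → β) : ℝ :=
  entropy p X + entropy p Y - entropy p (fun ω => (X ω, Y ω))

/-- Conditional entropy `H(X|Y) = H(X,Y) - H(Y)` (in bits). -/
noncomputable def condEntropy (p : Ω → ℝ) (X : Ω → α) (Y : Ω → β) : ℝ :=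
  entropy p (fun ω => (X ω, Y ω)) - entropy p Y

/-- Conditional mutual information `I(X;Y|Z) = H(X|Z) + H(Y|Z) - H(X,Y|Z)` (in bits). -/
noncomputable def condMutualInfo (p : Ω → ℝ) (X : Ω → α) (Y : Ω → β) (Z : Ω → γ) : ℝ :=
  condEntropy p X Z + condEntropy p Y Z - condEntropy p (fun ω => (X ω, Y ω)) Z

/-- Binary entropy function (in bits), with the convention `0 · log 0 = 0`. -/
noncomputable def binEntropyBits (x : ℝ) : ℝ :=
  -x * Real.logb 2 x - (1 - x) * Real.logb 2 (1 - x)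

/-- `p` is a probability mass function on the finite sample space `Ω`. -/
def IsProb {Ω : Type*} [Fintype Ω] (p : Ω → ℝ) : Prop :=
  (∀ ω, 0 ≤ p ω) ∧ ∑ ω, p ω = 1

/-- Probability of the event `E`. -/
noncomputable def probEvent (p : Ω → ℝ) (E : Ω → Prop) [DecidablePred E] : ℝ :=
  ∑ ω, if E ω then p ω else 0

/-- `X` and `Y` are independent random variables. -/
def IndepRV (p : Ω → ℝ) (X : Ω → α) (Y : Ω → β) : Prop :=
  ∀ a b, probOf p (fun ω => (X ω, Y ω)) (a, b) = probOf p X a * probOf p Y b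

/-!
Compare the joint law `a(u, v)` of `(U, V)` with `q(v) c(u, v)`, where `q` is the law of `V` and
`c(·, v)` puts mass `1 - pₑ` on `v` and spreads `pₑ` evenly over the other `M - 1` values.
Summing `a log (q c / a) ≤ q c - a` over all `(u, v)` (Gibbs) gives `H(U|V) ≤ -∑ a log c`, and this
cross entropy sees `a` only through `P(U = V) = 1 - pₑ`, where it equals `H_b(pₑ) + pₑ log (M - 1)`.
-/

lemma mul_sub_logb_le_div_log {b x y : ℝ} (hb : 1 < b) (hx : 0 ≤ x) (hy : 0 ≤ y)
    (hxy : x ≠ 0 → y ≠ 0) : x * (logb b y - logb b x) ≤ (y - x) / log b := by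
  rcases hx.eq_or_lt with rfl | hx
  · simpa using div_nonneg hy (log_nonneg hb.le)
  have hy : 0 < y := hy.lt_of_ne' (hxy hx.ne')
  rw [← logb_div hy.ne' hx.ne', logb, ← mul_div_assoc, div_le_div_iff_of_pos_right (log_pos hb)]
  calc x * log (y / x) ≤ x * (y / x - 1) :=
        mul_le_mul_of_nonneg_left (log_le_sub_one_of_pos (div_pos hy hx)) hx.le
    _ = y - x := by field_simp

section

variable {p : Ω → ℝ}

lemma probEvent_nonneg (hp : ∀ ω, 0 ≤ p ω) (E : Ω → Prop) [DecidablePred E] :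
    0 ≤ probEvent p E :=
  sum_nonneg fun ω _ => by split_ifs <;> simp [hp ω]

lemma probEvent_not (hp : ∑ ω, p ω = 1) (E : Ω → Prop) [DecidablePred E] :
    probEvent p (fun ω => ¬E ω) = 1 - probEvent p E := by
  rw [eq_sub_iff_add_eq, probEvent, probEvent, ← sum_add_distrib, ← hp]
  exact sum_congr rfl fun ω _ => by by_cases h : E ω <;> simp [h]

lemma sum_mul_ite (E : Ω → Prop) [DecidablePred E] (s t : ℝ) :
    ∑ ω, p ω * (if E ω then s else t) =
      probEvent p E * s + probEvent p (fun ω => ¬E ω) * t := by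
  simp only [probEvent, sum_mul, ← sum_add_distrib]
  exact sum_congr rfl fun ω _ => by by_cases h : E ω <;> simp [h]

lemma sum_probOf_mul (X : Ω → α) (f : α → ℝ) :
    ∑ x, probOf p X x * f x = ∑ ω, p ω * f (X ω) := by
  simp only [probOf, sum_mul, ite_mul, zero_mul]
  rw [sum_comm]
  simp

variable {κ : Type*} [DecidableEq κ]

lemma probOf_nonneg (hp : ∀ ω, 0 ≤ p ω) (X : Ω → κ) (x : κ) : 0 ≤ probOf p X x :=
  sum_nonneg fun ω _ => by split_ifs <;> simp [hp ω]

lemma probOf_le_probEvent (hp : ∀ ω, 0 ≤ p ω) {X : Ω → κ} {x : κ} {E : Ω → Prop}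
    [DecidablePred E] (hE : ∀ ω, X ω = x → E ω) : probOf p X x ≤ probEvent p E :=
  sum_le_sum fun ω _ => by
    by_cases hX : X ω = x
    · simp [hX, hE ω hX]
    · split_ifs <;> simp [hp ω]

lemma sum_probOf_pair_left (X : Ω → α) (Y : Ω → κ) (y : κ) :
    ∑ x, probOf p (fun ω => (X ω, Y ω)) (x, y) = probOf p Y y := by
  simp only [probOf, Prod.mk.injEq]
  rw [sum_comm]
  refine sum_congr rfl fun ω _ => ?_
  by_cases h : Y ω = y <;> simp [h]

end

lemma condEntropy_eq_sum (p : Ω → ℝ) (X : Ω → α) (Y : Ω → β) :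
    condEntropy p X Y = ∑ x, ∑ y, probOf p (fun ω => (X ω, Y ω)) (x, y) *
      (logb 2 (probOf p Y y) - logb 2 (probOf p (fun ω => (X ω, Y ω)) (x, y))) := by
  have hY : entropy p Y = ∑ x, ∑ y, -(probOf p (fun ω => (X ω, Y ω)) (x, y) *
      logb 2 (probOf p Y y)) := by
    rw [entropy, sum_comm]
    exact sum_congr rfl fun y _ => by rw [sum_neg_distrib, ← sum_mul, sum_probOf_pair_left]
  rw [condEntropy, entropy, Fintype.sum_prod_type, hY, ← sum_sub_distrib]
  exact sum_congr rfl fun x _ => by rw [← sum_sub_distrib]; exact sum_congr rfl fun y _ => by ring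

lemma condEntropy_le_neg_sum_mul_logb {p : Ω → ℝ} (hp : ∀ ω, 0 ≤ p ω) (X : Ω → α) (Y : Ω → β)
    {c : α → β → ℝ} (hc : ∀ x y, 0 ≤ c x y) (hc1 : ∀ y, ∑ x, c x y ≤ 1)
    (hsupp : ∀ x y, probOf p (fun ω => (X ω, Y ω)) (x, y) ≠ 0 → c x y ≠ 0) :
    condEntropy p X Y ≤ -∑ ω, p ω * logb 2 (c (X ω) (Y ω)) := by
  set a := fun x y => probOf p (fun ω => (X ω, Y ω)) (x, y)
  set q := probOf p Y
  have ha0 : ∀ x y, 0 ≤ a x y := fun x y => probOf_nonneg hp _ (x, y)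
  have hq : ∀ y, ∑ x, a x y = q y := sum_probOf_pair_left X Y
  have hterm : ∀ x y, a x y * (logb 2 (q y) - logb 2 (a x y)) ≤
      (q y * c x y - a x y) / log 2 - a x y * logb 2 (c x y) := by
    intro x y
    have hq0 : 0 ≤ q y := probOf_nonneg hp Y y
    rcases (ha0 x y).eq_or_lt with h0 | hpos
    · rw [← h0]
      simpa using div_nonneg (mul_nonneg hq0 (hc x y)) (log_nonneg one_le_two)
    have hqy : q y ≠ 0 :=
      (hpos.trans_le (hq y ▸ single_le_sum (fun x' _ => ha0 x' y) (mem_univ x))).ne'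
    have hgibbs := mul_sub_logb_le_div_log one_lt_two hpos.le (mul_nonneg hq0 (hc x y))
      fun _ => mul_ne_zero hqy (hsupp x y hpos.ne')
    rw [logb_mul hqy (hsupp x y hpos.ne')] at hgibbs
    linarith
  have hmass : ∑ x, ∑ y, q y * c x y ≤ ∑ x, ∑ y, a x y := by
    rw [sum_comm, sum_comm (f := a)]
    refine sum_le_sum fun y _ => ?_
    rw [← mul_sum, hq]
    exact mul_le_of_le_one_right (probOf_nonneg hp Y y) (hc1 y)
  have hcross : ∑ x, ∑ y, a x y * logb 2 (c x y) = ∑ ω, p ω * logb 2 (c (X ω) (Y ω)) := by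
    rw [← Fintype.sum_prod_type' (f := fun x y => a x y * logb 2 (c x y))]
    exact sum_probOf_mul (fun ω => (X ω, Y ω)) fun z => logb 2 (c z.1 z.2)
  calc condEntropy p X Y = ∑ x, ∑ y, a x y * (logb 2 (q y) - logb 2 (a x y)) :=
        condEntropy_eq_sum p X Y
    _ ≤ ∑ x, ∑ y, ((q y * c x y - a x y) / log 2 - a x y * logb 2 (c x y)) :=
        sum_le_sum fun x _ => sum_le_sum fun y _ => hterm x y
    _ = (∑ x, ∑ y, q y * c x y - ∑ x, ∑ y, a x y) / log 2 -
          ∑ x, ∑ y, a x y * logb 2 (c x y) := by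
        simp only [← sum_sub_distrib, sum_div]
    _ ≤ -∑ ω, p ω * logb 2 (c (X ω) (Y ω)) := by
        have := div_nonpos_of_nonpos_of_nonneg (sub_nonpos.2 hmass) (log_nonneg one_le_two)
        linarith

section

variable {κ : Type*} [DecidableEq κ]

noncomputable def fanoKernel (M : ℕ) (pe : ℝ) (u v : κ) : ℝ :=
  if u = v then 1 - pe else pe / ((M : ℝ) - 1)

lemma fanoKernel_nonneg {M : ℕ} (hM : 1 ≤ M) {pe : ℝ} (h0 : 0 ≤ pe) (h1 : pe ≤ 1) (u v : κ) :
    0 ≤ fanoKernel M pe u v := by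
  unfold fanoKernel
  split_ifs
  · linarith
  · exact div_nonneg h0 (sub_nonneg.2 (by exact_mod_cast hM))

lemma fanoKernel_ne_zero {p : Ω → ℝ} (hp : IsProb p) {M : ℕ} (hM : 1 < M) {U V : Ω → κ}
    {u v : κ} (h : probOf p (fun ω => (U ω, V ω)) (u, v) ≠ 0) :
    fanoKernel M (probEvent p fun ω => U ω ≠ V ω) u v ≠ 0 := by
  have ha := (probOf_nonneg hp.1 _ (u, v)).lt_of_ne' h
  unfold fanoKernel
  split_ifs with huv
  · have hle := probOf_le_probEvent hp.1 (X := fun ω => (U ω, V ω)) (x := (u, v))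
      (E := fun ω => U ω = V ω) fun ω hω => by rw [Prod.mk.injEq] at hω; rw [hω.1, hω.2, huv]
    have := probEvent_not hp.2 (fun ω => U ω = V ω)
    linarith
  · have hle := probOf_le_probEvent hp.1 (X := fun ω => (U ω, V ω)) (x := (u, v))
      (E := fun ω => U ω ≠ V ω) fun ω hω => by rw [Prod.mk.injEq] at hω; rwa [hω.1, hω.2]
    have hM' : (0 : ℝ) < M - 1 := sub_pos.2 (by exact_mod_cast hM)
    exact (div_pos (ha.trans_le hle) hM').ne'

lemma neg_sum_mul_logb_fanoKernel {p : Ω → ℝ} (hp : ∑ ω, p ω = 1) (U V : Ω → κ) {M : ℕ}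
    (hM : 1 < M) :
    -∑ ω, p ω * logb 2 (fanoKernel M (probEvent p fun ω => U ω ≠ V ω) (U ω) (V ω)) =
      binEntropyBits (probEvent p fun ω => U ω ≠ V ω) +
        (probEvent p fun ω => U ω ≠ V ω) * logb 2 ((M : ℝ) - 1) := by
  set pe := probEvent p fun ω => U ω ≠ V ω
  have hsame : probEvent p (fun ω => U ω = V ω) = 1 - pe := by
    have := probEvent_not hp (fun ω => U ω = V ω)
    linarith
  simp only [fanoKernel, apply_ite (logb 2)]
  rw [sum_mul_ite, hsame]
  rcases eq_or_ne pe 0 with h0 | h0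
  · simp [binEntropyBits, h0]
  · rw [logb_div h0 (sub_ne_zero.2 (by exact_mod_cast hM.ne'))]
    unfold binEntropyBits
    ring

end

lemma sum_fanoKernel {M : ℕ} (hcard : Fintype.card α = M) (hM : 1 < M) (pe : ℝ) (v : α) :
    ∑ u, fanoKernel M pe u v = 1 := by
  have hM' : (M : ℝ) - 1 ≠ 0 := sub_ne_zero.2 (by exact_mod_cast hM.ne')
  simp only [fanoKernel]
  rw [← add_sum_erase _ _ (mem_univ v), if_pos rfl,
    sum_congr rfl fun u hu => if_neg (ne_of_mem_erase hu), sum_const,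
    card_erase_of_mem (mem_univ v), card_univ, hcard, nsmul_eq_mul, Nat.cast_sub hM.le,
    Nat.cast_one, mul_div_cancel₀ _ hM']
  ring

/-- Fano's inequality: `H(U|V) ≤ H_b(p_e) + p_e log₂(M-1)`. -/
theorem stmt2 (p : Ω → ℝ) (hp : IsProb p) (U V : Ω → α) (M : ℕ)
    (hM : 2 ≤ M) (hcard : Fintype.card α = M)
    (pe : ℝ) (hpe : pe = probEvent p (fun ω => U ω ≠ V ω)) :
    condEntropy p U V ≤ binEntropyBits pe + pe * Real.logb 2 ((M : ℝ) - 1) := by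
  subst hpe
  have hsame := probEvent_not hp.2 fun ω => U ω = V ω
  have hpe0 := probEvent_nonneg hp.1 fun ω => U ω ≠ V ω
  have hpe1 : probEvent p (fun ω => U ω ≠ V ω) ≤ 1 := by
    linarith [probEvent_nonneg hp.1 fun ω => U ω = V ω]
  calc condEntropy p U V
      ≤ -∑ ω, p ω * logb 2 (fanoKernel M (probEvent p fun ω => U ω ≠ V ω) (U ω) (V ω)) :=
        condEntropy_le_neg_sum_mul_logb hp.1 U V (fanoKernel_nonneg (by omega) hpe0 hpe1)
          (fun v => (sum_fanoKernel hcard hM _ v).le) fun _ _ => fanoKernel_ne_zero hp hM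
    _ = _ := neg_sum_mul_logb_fanoKernel hp.2 U V hM
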